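/- arXiv:2304.12088 — 4 statements merged into one kernel-verified Lean document; each statement's English description precedes it below -/
import Mathlib

section
/- Let (X, d_X, ⊙, 0_X) be an editable space and (M, μ) a measure space. Then the space L¹(M, μ, X) of (equivalence classes up to μ-null sets of) measurable functions f : M → X with ∫_M d_X(0_X, f(p)) dμ(p) < ∞, equipped with pointwise monoid operation and metric d_W(f, g) = ∫_M d_X(f(p), g(p)) dμ(p), satisfies: d_W(0, f ⊙ g) = d_W(0, f) + d_W(0, g), and d_W(f, g) = d_W(h ⊙ f, h ⊙ g) = d_W(f ⊙ h, g ⊙ h); in particular it is an editable space. -/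
/-- An *editable space*: a metric space `(X, d)` together with a monoid structure
`(X, ⊙, 0_X)` such that `d 0 ·` is a monoid homomorphism to `(ℝ, +)` (P3) and
`d` is left- and right-`⊙`-invariant (P4). -/
structure EditablePkg (X : Type*) where
  d : X → X → ℝ
  op : X → X → X
  zero : X
  d_self : ∀ x, d x x = 0
  d_comm : ∀ x y, d x y = d y x
  d_triangle : ∀ x y z, d x z ≤ d x y + d y z
  eq_of_d : ∀ x y, d x y = 0 → x = y
  op_assoc : ∀ x y z, op (op x y) z = op x (op y z)
  zero_op : ∀ x, op zero x = x
  op_zero : ∀ x, op x zero = x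
  d_zero_op : ∀ x y, d zero (op x y) = d zero x + d zero y
  d_op_left : ∀ x y z, d (op z x) (op z y) = d x y
  d_op_right : ∀ x y z, d (op x z) (op y z) = d x y

open MeasureTheory

/-- For an editable space `X` and a measure space `(M, μ)`, the space of
functions `f : M → X` with `∫ d(0, f) dμ < ∞`, with pointwise operation and the
metric `d_W(f,g) = ∫ d(f(p), g(p)) dμ`, satisfies
`d_W(0, f ⊙ g) = d_W(0, f) + d_W(0, g)` and
`d_W(f, g) = d_W(h ⊙ f, h ⊙ g) = d_W(f ⊙ h, g ⊙ h)`; i.e. it is editable. -/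
theorem stmt_4 {X M : Type*} [MeasurableSpace M] (μ : Measure M)
    (E : EditablePkg X) (f g h : M → X)
    (hf : Integrable (fun p => E.d E.zero (f p)) μ)
    (hg : Integrable (fun p => E.d E.zero (g p)) μ) :
    (∫ p, E.d E.zero (E.op (f p) (g p)) ∂μ
        = (∫ p, E.d E.zero (f p) ∂μ) + ∫ p, E.d E.zero (g p) ∂μ) ∧
    (∫ p, E.d (f p) (g p) ∂μ
        = ∫ p, E.d (E.op (h p) (f p)) (E.op (h p) (g p)) ∂μ) ∧
    (∫ p, E.d (f p) (g p) ∂μ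
        = ∫ p, E.d (E.op (f p) (h p)) (E.op (g p) (h p)) ∂μ) := by
  refine ⟨?_, ?_, ?_⟩
  · simp only [E.d_zero_op]
    exact integral_add hf hg
  · simp only [E.d_op_left]
  · simp only [E.d_op_right]
end

section
/- For every directed acyclic graph G = (V, E), there exists a unique graph G^t = (V, E^t) such that (G^t)^T = G^T and no proper subset E' ⊊ E^t satisfies (V, E')^T = G^T; namely E^t = ⋂ { E' ⊆ V × V : (V, E')^T = G^T }. (Uniqueness of the transitive reduction of a finite DAG.) -/
/-!
Call `c` an intermediate of `a, b` if `a → c → b` in the transitive closure `T` of `E`, and let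
`R a b` say that `T a b` holds and `a, b` have no intermediate. Every relation with closure `T`
contains `R`: a path from `a` to `b` of length at least two passes through an intermediate.
Conversely, for an acyclic `E` on a finite vertex set, `T` is a strict order that is well founded
in both directions, so every `T`-edge `a → b` factors as a `T`-edge `a → c` into the
`T`-maximal intermediate `c` followed by the `R`-edge `c → b`; by well-founded induction on `b`,
the closure of `R` is `T`. Hence `R` is the least relation with closure `T`, which makes it the
unique minimal one and the intersection of all of them.
-/

namespace Relation

variable {α : Type*}

def transReduction (r : α → α → Prop) (a b : α) : Prop :=
  TransGen r a b ∧ ∀ c, TransGen r a c → ¬ TransGen r c b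

theorem transReduction_le_of_transGen_eq {r s : α → α → Prop} (h : TransGen s = TransGen r) :
    transReduction r ≤ s := by
  rintro a b ⟨hab, hno⟩
  rw [← h] at hab hno
  cases hab with
  | single hab => exact hab
  | tail hac hcb => exact absurd (TransGen.single hcb) (hno _ hac)

theorem eq_transReduction_of_le_of_transGen_eq {r s : α → α → Prop}
    (hle : s ≤ transReduction r) (h : TransGen s = TransGen r) : s = transReduction r :=
  le_antisymm hle (transReduction_le_of_transGen_eq h)

theorem transGen_transReduction [Finite α] {r : α → α → Prop} (hr : ∀ a, ¬ TransGen r a a) :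
    TransGen (transReduction r) = TransGen r := by
  have : IsTrans α (TransGen r) := ⟨fun _ _ _ => TransGen.trans⟩
  have : Std.Irrefl (TransGen r) := ⟨hr⟩
  ext a b
  refine ⟨fun h => ?_, fun hab => ?_⟩
  · induction h with
    | single h => exact h.1
    | tail _ hcb ih => exact ih.trans hcb.1
  induction b using (Finite.wellFounded_of_trans_of_irrefl (TransGen r)).induction
    generalizing a with
  | _ b ih =>
    by_cases hmid : ∃ c, TransGen r a c ∧ TransGen r c b
    · obtain ⟨c, ⟨hac, hcb⟩, hmax⟩ :=
        (Finite.wellFounded_of_trans_of_irrefl (Function.swap (TransGen r))).has_min _ hmid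
      have hred : transReduction r c b :=
        ⟨hcb, fun d hcd hdb => hmax d ⟨hac.trans hcd, hdb⟩ hcd⟩
      exact (ih c hcb a hac).tail hred
    · simp only [not_exists, not_and] at hmid
      exact TransGen.single ⟨hab, hmid⟩

theorem forall_transGen_eq_imp_iff_transReduction [Finite α] {r : α → α → Prop}
    (hr : ∀ a, ¬ TransGen r a a) (a b : α) :
    (∀ s : α → α → Prop, TransGen s = TransGen r → s a b) ↔ transReduction r a b :=
  ⟨fun h => h _ (transGen_transReduction hr),
    fun h _ hs => transReduction_le_of_transGen_eq hs a b h⟩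

end Relation

/-- Uniqueness of the transitive reduction of a finite DAG: for every acyclic
relation `E` on a finite vertex set there is a unique relation `Et` with the
same transitive closure as `E` such that no proper subrelation of `Et` has that
transitive closure; namely `Et` is the intersection of all relations whose
transitive closure equals that of `E`. -/
theorem stmt_10 {V : Type*} [Fintype V] (E : V → V → Prop)
    (hacyc : ∀ a : V, ¬ Relation.TransGen E a a) :
    (∃! Et : V → V → Prop,
      Relation.TransGen Et = Relation.TransGen E ∧
      ∀ Et' : V → V → Prop, (∀ a b, Et' a b → Et a b) → Et' ≠ Et →
        Relation.TransGen Et' ≠ Relation.TransGen E) ∧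
    (let Et : V → V → Prop := fun a b =>
        ∀ E' : V → V → Prop, Relation.TransGen E' = Relation.TransGen E → E' a b
     Relation.TransGen Et = Relation.TransGen E ∧
      ∀ Et' : V → V → Prop, (∀ a b, Et' a b → Et a b) → Et' ≠ Et →
        Relation.TransGen Et' ≠ Relation.TransGen E) := by
  set R := Relation.transReduction E
  have hclosure : Relation.TransGen R = Relation.TransGen E :=
    Relation.transGen_transReduction hacyc
  have hminimal : ∀ Et' : V → V → Prop, (∀ a b, Et' a b → R a b) → Et' ≠ R →
      Relation.TransGen Et' ≠ Relation.TransGen E :=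
    fun _ hle hne h => hne (Relation.eq_transReduction_of_le_of_transGen_eq hle h)
  have hinter : (fun a b => ∀ E' : V → V → Prop,
      Relation.TransGen E' = Relation.TransGen E → E' a b) = R :=
    funext₂ fun a b => propext (Relation.forall_transGen_eq_imp_iff_transReduction hacyc a b)
  refine ⟨⟨R, ⟨hclosure, hminimal⟩, fun F ⟨hF, hFmin⟩ => ?_⟩, ?_⟩
  · by_contra hne
    exact hFmin R (Relation.transReduction_le_of_transGen_eq hF) (Ne.symm hne) hclosure
  · intro Et
    rw [show Et = R from hinter]
    exact ⟨hclosure, hminimal⟩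
end

section
/- Two finite regular constructible persistent sets S, S' : ℝ → Set are naturally isomorphic if and only if they have the same minimal critical set C = {t_1 < ... < t_n} and their restrictions S|_C and S'|_C to C are naturally isomorphic as functors C → Set. -/
universe u

/-- A persistent set: a functor `(ℝ, ≤) → Set`. -/
structure PersistentSet where
  obj : ℝ → Type u
  map : ∀ {t t' : ℝ}, t ≤ t' → obj t → obj t'
  map_id : ∀ (t : ℝ) (x : obj t), map (le_refl t) x = x
  map_comp : ∀ {t t' t'' : ℝ} (h : t ≤ t') (h' : t' ≤ t'') (x : obj t),
    map h' (map h x) = map (h.trans h') x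

/-- `C` is a critical set for `S`: `S(t) = ∅` below all critical values, and the
structure maps are bijective on intervals containing no critical value. -/
def IsCriticalSet (S : PersistentSet.{u}) (C : Finset ℝ) : Prop :=
  (∀ t : ℝ, (∀ c ∈ C, t < c) → IsEmpty (S.obj t)) ∧
  (∀ t t' : ℝ, ∀ h : t ≤ t', (∀ c ∈ C, c < t ∨ t' < c) →
    Function.Bijective (S.map h))

/-- `S` is constructible with minimal critical set `C`. -/
def MinimalCriticalSet (S : PersistentSet.{u}) (C : Finset ℝ) : Prop :=
  IsCriticalSet S C ∧ ∀ C' : Finset ℝ, IsCriticalSet S C' → C ⊆ C'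

/-- `S` is regular: at every critical value `c`, `S(c ≤ c + ε)` is bijective for
all sufficiently small `ε > 0`. -/
def RegularPS (S : PersistentSet.{u}) (C : Finset ℝ) : Prop :=
  ∀ c ∈ C, ∃ ε₀ > (0 : ℝ), ∀ ε : ℝ, ∀ hε : 0 < ε, ∀ hε' : ε < ε₀,
    Function.Bijective (S.map (show c ≤ c + ε by linarith))

/-- `S` is a finite persistent set. -/
def FinitePS (S : PersistentSet.{u}) : Prop := ∀ t : ℝ, Finite (S.obj t)

/-- A natural isomorphism of persistent sets. -/
def PSIso (S S' : PersistentSet.{u}) : Prop :=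
  ∃ η : ∀ t : ℝ, S.obj t → S'.obj t,
    (∀ t, Function.Bijective (η t)) ∧
    ∀ (t t' : ℝ) (h : t ≤ t') (x : S.obj t), η t' (S.map h x) = S'.map h (η t x)

/-- A natural isomorphism of the restrictions to a critical set `C`. -/
def PSIsoOn (S S' : PersistentSet.{u}) (C : Finset ℝ) : Prop :=
  ∃ η : ∀ t : ℝ, t ∈ C → S.obj t → S'.obj t,
    (∀ t (ht : t ∈ C), Function.Bijective (η t ht)) ∧
    ∀ (t t' : ℝ) (ht : t ∈ C) (ht' : t' ∈ C) (h : t ≤ t') (x : S.obj t),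
      η t' ht' (S.map h x) = S'.map h (η t ht x)

/-
Both directions rest on the fact that a regular constructible persistent set is determined by
its values at the critical set `C`: for every `t` above `min C`, the structure map
`S(c ≤ t)` from the last critical value `c ≤ t` is a bijection (regularity gives it on
`[c, c + ε]`, constructibility on `[c + ε, t]`), and `S(t) = ∅` below `min C`.
So a natural isomorphism on `C` extends to all of `ℝ` by transporting along these
bijections. Conversely an isomorphism carries critical sets to critical sets, hence preserves
the minimal one, and restricts to `C`.
-/

namespace PersistentSet

variable (S : PersistentSet.{u})

lemma map_trans {t t' t'' : ℝ} (h : t ≤ t') (h' : t' ≤ t'') :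
    (S.map (h.trans h') : S.obj t → S.obj t'') = S.map h' ∘ S.map h :=
  funext fun x => (S.map_comp h h' x).symm

lemma bijective_map_refl (t : ℝ) : Function.Bijective (S.map (le_refl t)) := by
  have : (S.map (le_refl t) : S.obj t → S.obj t) = id := funext (S.map_id t)
  exact this ▸ Function.bijective_id

end PersistentSet

namespace PSIso

variable {S S' : PersistentSet.{u}}

lemma symm (h : PSIso S S') : PSIso S' S := by
  obtain ⟨η, hbij, hnat⟩ := h
  refine ⟨fun t => (Equiv.ofBijective _ (hbij t)).symm, fun t => Equiv.bijective _, ?_⟩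
  intro t t' h y
  apply (hbij t').1
  simp only [Equiv.ofBijective_apply_symm_apply, hnat]

lemma psIsoOn (h : PSIso S S') (C : Finset ℝ) : PSIsoOn S S' C := by
  obtain ⟨η, hbij, hnat⟩ := h
  exact ⟨fun t _ => η t, fun t _ => hbij t, fun t t' _ _ => hnat t t'⟩

end PSIso

lemma IsCriticalSet.of_psIso {S S' : PersistentSet.{u}} {C : Finset ℝ}
    (hC : IsCriticalSet S C) (h : PSIso S S') : IsCriticalSet S' C := by
  obtain ⟨η, hbij, hnat⟩ := h
  refine ⟨fun t ht => ?_, fun t t' htt' ht => ?_⟩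
  · have := hC.1 t ht
    exact (hbij t).2.isEmpty
  · have hcomm : η t' ∘ S.map htt' = S'.map htt' ∘ η t := funext (hnat t t' htt')
    rw [← Function.Bijective.of_comp_iff _ (hbij t), ← hcomm]
    exact (hbij t').comp (hC.2 t t' htt' ht)

lemma MinimalCriticalSet.eq_of_psIso {S S' : PersistentSet.{u}} {C C' : Finset ℝ}
    (hC : MinimalCriticalSet S C) (hC' : MinimalCriticalSet S' C') (h : PSIso S S') :
    C = C' :=
  (hC.2 C' (hC'.1.of_psIso h.symm)).antisymm (hC'.2 C (hC.1.of_psIso h))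

section LastCritical

variable {C : Finset ℝ} {t : ℝ}

noncomputable def lastCritical (C : Finset ℝ) (t : ℝ) (ht : (C.filter (· ≤ t)).Nonempty) : ℝ :=
  (C.filter (· ≤ t)).max' ht

lemma lastCritical_mem (ht : (C.filter (· ≤ t)).Nonempty) : lastCritical C t ht ∈ C :=
  (Finset.mem_filter.1 (Finset.max'_mem _ ht)).1

lemma lastCritical_le (ht : (C.filter (· ≤ t)).Nonempty) : lastCritical C t ht ≤ t :=
  (Finset.mem_filter.1 (Finset.max'_mem _ ht)).2

lemma le_lastCritical (ht : (C.filter (· ≤ t)).Nonempty) {c : ℝ} (hc : c ∈ C) (hct : c ≤ t) :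
    c ≤ lastCritical C t ht :=
  Finset.le_max' _ c (Finset.mem_filter.2 ⟨hc, hct⟩)

end LastCritical

namespace IsCriticalSet

variable {S : PersistentSet.{u}} {C : Finset ℝ}

lemma isEmpty_obj_of_not_nonempty (hC : IsCriticalSet S C) {t : ℝ}
    (ht : ¬ (C.filter (· ≤ t)).Nonempty) : IsEmpty (S.obj t) :=
  hC.1 t fun c hc => lt_of_not_ge fun hct => ht ⟨c, Finset.mem_filter.2 ⟨hc, hct⟩⟩

lemma bijective_map_of_forall_le (hC : IsCriticalSet S C) (hreg : RegularPS S C) {c t : ℝ}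
    (hc : c ∈ C) (hct : c ≤ t) (hmax : ∀ c' ∈ C, c' ≤ t → c' ≤ c) :
    Function.Bijective (S.map hct) := by
  rcases hct.eq_or_lt with rfl | hlt
  · exact S.bijective_map_refl c
  obtain ⟨ε₀, hε₀, hε⟩ := hreg c hc
  set ε := min (ε₀ / 2) (t - c)
  have hε_pos : 0 < ε := lt_min (by linarith) (by linarith)
  have hε_lt : ε < ε₀ := (min_le_left _ _).trans_lt (by linarith)
  have hcε : c + ε ≤ t := by linarith [min_le_right (ε₀ / 2) (t - c)]
  have hgap : ∀ c' ∈ C, c' < c + ε ∨ t < c' := fun c' hc' =>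
    (le_or_gt c' t).imp (fun hle => (hmax c' hc' hle).trans_lt (by linarith)) id
  rw [S.map_trans (show c ≤ c + ε by linarith) hcε]
  exact (hC.2 _ _ hcε hgap).comp (hε ε hε_pos hε_lt)

lemma bijective_map_lastCritical (hC : IsCriticalSet S C) (hreg : RegularPS S C) {t : ℝ}
    (ht : (C.filter (· ≤ t)).Nonempty) : Function.Bijective (S.map (lastCritical_le ht)) :=
  hC.bijective_map_of_forall_le hreg (lastCritical_mem ht) _ fun _ => le_lastCritical ht

end IsCriticalSet

section Extension

variable {S S' : PersistentSet.{u}} {C : Finset ℝ}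
  (hS : IsCriticalSet S C) (hreg : RegularPS S C) (η : ∀ t ∈ C, S.obj t → S'.obj t)

noncomputable def extendFromCritical (t : ℝ) : S.obj t → S'.obj t :=
  if ht : (C.filter (· ≤ t)).Nonempty then
    S'.map (lastCritical_le ht) ∘ η _ (lastCritical_mem ht) ∘
      Function.surjInv (hS.bijective_map_lastCritical hreg ht).2
  else fun x => (hS.isEmpty_obj_of_not_nonempty ht).elim x

lemma extendFromCritical_map
    (hnat : ∀ (t t' : ℝ) (ht : t ∈ C) (ht' : t' ∈ C) (h : t ≤ t') (x : S.obj t),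
      η t' ht' (S.map h x) = S'.map h (η t ht x))
    {c t : ℝ} (hc : c ∈ C) (hct : c ≤ t) (x : S.obj c) :
    extendFromCritical hS hreg η t (S.map hct x) = S'.map hct (η c hc x) := by
  have ht : (C.filter (· ≤ t)).Nonempty := ⟨c, Finset.mem_filter.2 ⟨hc, hct⟩⟩
  have hcd : c ≤ lastCritical C t ht := le_lastCritical ht hc hct
  rw [extendFromCritical, dif_pos ht, ← S.map_comp hcd (lastCritical_le ht),
    ← S'.map_comp hcd (lastCritical_le ht), ← hnat _ _ hc (lastCritical_mem ht) hcd]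
  simp only [Function.comp_apply]
  rw [Function.leftInverse_surjInv (hS.bijective_map_lastCritical hreg ht)]

lemma extendFromCritical_natural
    (hnat : ∀ (t t' : ℝ) (ht : t ∈ C) (ht' : t' ∈ C) (h : t ≤ t') (x : S.obj t),
      η t' ht' (S.map h x) = S'.map h (η t ht x)) {t t' : ℝ} (h : t ≤ t') (x : S.obj t) :
    extendFromCritical hS hreg η t' (S.map h x) =
      S'.map h (extendFromCritical hS hreg η t x) := by
  by_cases ht : (C.filter (· ≤ t)).Nonempty
  · obtain ⟨y, rfl⟩ := (hS.bijective_map_lastCritical hreg ht).2 x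
    have hc := lastCritical_mem ht
    rw [S.map_comp, extendFromCritical_map hS hreg η hnat hc,
      extendFromCritical_map hS hreg η hnat hc, S'.map_comp]
  · exact (hS.isEmpty_obj_of_not_nonempty ht).elim x

end Extension

lemma PSIsoOn.psIso {S S' : PersistentSet.{u}} {C : Finset ℝ}
    (hS : IsCriticalSet S C) (hS' : IsCriticalSet S' C)
    (hreg : RegularPS S C) (hreg' : RegularPS S' C) (h : PSIsoOn S S' C) : PSIso S S' := by
  obtain ⟨η, hbij, hnat⟩ := h
  refine ⟨extendFromCritical hS hreg η, fun t => ?_,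
    fun t t' => extendFromCritical_natural hS hreg η hnat⟩
  unfold extendFromCritical
  split_ifs with ht
  · have hsurjInv := Function.leftInverse_surjInv (hS.bijective_map_lastCritical hreg ht)
    exact (hS'.bijective_map_lastCritical hreg' ht).comp <|
      (hbij _ _).comp ⟨Function.injective_surjInv _, hsurjInv.surjective⟩
  · have := hS.isEmpty_obj_of_not_nonempty ht
    have := hS'.isEmpty_obj_of_not_nonempty ht
    exact ⟨fun x => isEmptyElim x, fun y => isEmptyElim y⟩

theorem stmt_12_general (S S' : PersistentSet.{u}) (C C' : Finset ℝ)
    (hC : MinimalCriticalSet S C) (hC' : MinimalCriticalSet S' C')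
    (hreg : RegularPS S C) (hreg' : RegularPS S' C') :
    PSIso S S' ↔ (C = C' ∧ PSIsoOn S S' C) := by
  refine ⟨fun h => ⟨hC.eq_of_psIso hC' h, h.psIsoOn C⟩, ?_⟩
  rintro ⟨rfl, h⟩
  exact h.psIso hC.1 hC'.1 hreg hreg'

/-- Two finite regular constructible persistent sets are naturally isomorphic
iff they have the same minimal critical set and their restrictions to it are
naturally isomorphic. -/
theorem stmt_12 (S S' : PersistentSet.{u}) (C C' : Finset ℝ)
    (hC : MinimalCriticalSet S C) (hC' : MinimalCriticalSet S' C')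
    (hreg : RegularPS S C) (hreg' : RegularPS S' C')
    (hfin : FinitePS S) (hfin' : FinitePS S') :
    PSIso S S' ↔ (C = C' ∧ PSIsoOn S S' C) :=
  stmt_12_general S S' C C' hC hC' hreg hreg'
end

section
/- Let S be a finite regular constructible persistent set with minimal critical set C, such that S(t) has cardinality 1 for all sufficiently large t. Then in the transitive reduction G of the DAG of the display poset D_{S|C}, every vertex has at most one outgoing edge and the underlying graph is connected and acyclic with a unique maximal element; in particular G is a rooted tree. -/
/-! Functoriality makes the elements above a fixed `(t, p)` of the display poset a chain
(they are the images of `p` under the structure maps), so each vertex has at most one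
cover, and a cycle of covers would be a strict cycle in a partial order. By regularity
and the absence of critical values beyond `max C`, `S(max C)` is in bijection with
`S(t)` for large `t`, hence a single point; that point lies above every vertex. -/

universe u

variable (S : PersistentSet.{u}) (C : Finset ℝ)

/-- The display poset of the restriction of `S` to its critical set `C`. -/
def DisplayPoset := Σ c : {x : ℝ // x ∈ C}, S.obj c.val

/-- The order of the display poset: `(t, p) ≤ (t', p')` iff `t ≤ t'` and the
structure map sends `p` to `p'`. -/
def leD (a b : DisplayPoset S C) : Prop :=
  ∃ h : a.1.val ≤ b.1.val, S.map h a.2 = b.2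

/-- Strict order of the display poset. -/
def ltD (a b : DisplayPoset S C) : Prop := leD S C a b ∧ a ≠ b

/-- Edges of the transitive reduction of the DAG of the display poset: the
covering relation. -/
def coverD (a b : DisplayPoset S C) : Prop :=
  ltD S C a b ∧ ¬ ∃ z : DisplayPoset S C, ltD S C a z ∧ ltD S C z b

variable {S C}

lemma IsCriticalSet.nonempty_of_nonempty {t : ℝ} (hC : IsCriticalSet S C)
    (ht : Nonempty (S.obj t)) : C.Nonempty := by
  by_contra hne
  rw [Finset.not_nonempty_iff_eq_empty] at hne
  subst hne
  exact (hC.1 t (by simp)).false ht.some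

lemma IsCriticalSet.bijective_map_of_isGreatest {c t : ℝ} (hC : IsCriticalSet S C)
    (hreg : RegularPS S C) (hc : IsGreatest (C : Set ℝ) c) (hct : c ≤ t) :
    Function.Bijective (S.map hct) := by
  rcases hct.eq_or_lt with rfl | hlt
  · have : S.map hct = id := funext (S.map_id c)
    exact this ▸ Function.bijective_id
  obtain ⟨ε₀, hε₀, hbij⟩ := hreg c hc.1
  set ε := min (t - c) (ε₀ / 2)
  have hε : 0 < ε := lt_min (by linarith) (by linarith)
  have hcε : c + ε ≤ t := by linarith [min_le_left (t - c) (ε₀ / 2)]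
  have hstep : Function.Bijective (S.map hcε) :=
    hC.2 _ _ hcε fun c' hc' => Or.inl (by linarith [hc.2 hc'])
  have hcomp : S.map hcε ∘ S.map (show c ≤ c + ε by linarith) = S.map hct :=
    funext (S.map_comp _ _)
  exact hcomp ▸ hstep.comp (hbij ε hε (by linarith [min_le_right (t - c) (ε₀ / 2)]))

lemma leD_trans {a b c : DisplayPoset S C} (hab : leD S C a b) (hbc : leD S C b c) :
    leD S C a c := by
  obtain ⟨hab, eab⟩ := hab
  obtain ⟨hbc, ebc⟩ := hbc
  exact ⟨hab.trans hbc, by rw [← S.map_comp hab hbc, eab, ebc]⟩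

lemma leD_antisymm {a b : DisplayPoset S C} (hab : leD S C a b) (hba : leD S C b a) :
    a = b := by
  obtain ⟨⟨ta, hta⟩, pa⟩ := a
  obtain ⟨⟨tb, htb⟩, pb⟩ := b
  obtain ⟨hab, eab⟩ := hab
  obtain rfl : ta = tb := le_antisymm hab hba.1
  obtain rfl : pa = pb := (S.map_id ta pa).symm.trans eab
  rfl

lemma ltD_trans {a b c : DisplayPoset S C} (hab : ltD S C a b) (hbc : ltD S C b c) :
    ltD S C a c := by
  refine ⟨leD_trans hab.1 hbc.1, ?_⟩
  rintro rfl
  exact hab.2 (leD_antisymm hab.1 hbc.1)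

lemma leD_total_of_leD {a b b' : DisplayPoset S C} (hab : leD S C a b)
    (hab' : leD S C a b') : leD S C b b' ∨ leD S C b' b := by
  obtain ⟨hab, eab⟩ := hab
  obtain ⟨hab', eab'⟩ := hab'
  rcases le_total b.1.val b'.1.val with h | h
  · exact Or.inl ⟨h, by rw [← eab, S.map_comp, eab']⟩
  · exact Or.inr ⟨h, by rw [← eab', S.map_comp, eab]⟩

lemma eq_of_coverD_of_leD {a b b' : DisplayPoset S C} (hab : ltD S C a b)
    (hab' : coverD S C a b') (hbb' : leD S C b b') : b = b' := by
  by_contra hne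
  exact hab'.2 ⟨b, hab, hbb', hne⟩

lemma coverD_unique {a b b' : DisplayPoset S C} (hab : coverD S C a b)
    (hab' : coverD S C a b') : b = b' := by
  rcases leD_total_of_leD hab.1.1 hab'.1.1 with h | h
  · exact eq_of_coverD_of_leD hab.1 hab' h
  · exact (eq_of_coverD_of_leD hab'.1 hab h).symm

lemma ltD_of_transGen_coverD {a b : DisplayPoset S C}
    (h : Relation.TransGen (coverD S C) a b) : ltD S C a b := by
  induction h with
  | single h => exact h.1
  | tail _ hbc ih => exact ltD_trans ih hbc.1

lemma leD_of_isGreatest {m : DisplayPoset S C} (hm : IsGreatest (C : Set ℝ) m.1.val)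
    [Subsingleton (S.obj m.1.val)] (a : DisplayPoset S C) : leD S C a m :=
  ⟨hm.2 a.1.2, Subsingleton.elim _ _⟩

theorem stmt_13_general (hC : MinimalCriticalSet S C) (hreg : RegularPS S C)
    (hbig : ∃ T : ℝ, ∀ t : ℝ, T ≤ t → Nonempty (S.obj t) ∧ Subsingleton (S.obj t)) :
    (∀ a b b' : DisplayPoset S C, coverD S C a b → coverD S C a b' → b = b') ∧
    (∃! m : DisplayPoset S C, ∀ a : DisplayPoset S C, leD S C a m) ∧
    (∀ a : DisplayPoset S C, ¬ Relation.TransGen (coverD S C) a a) := by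
  obtain ⟨T, hT⟩ := hbig
  have hCne : C.Nonempty := hC.1.nonempty_of_nonempty (hT T le_rfl).1
  set c := C.max' hCne
  have hc : IsGreatest (C : Set ℝ) c := C.isGreatest_max' hCne
  have hct : c ≤ max T c := le_max_right _ _
  let e := Equiv.ofBijective _ (hC.1.bijective_map_of_isGreatest hreg hc hct)
  obtain ⟨hne, hsub⟩ := hT (max T c) (le_max_left _ _)
  have : Subsingleton (S.obj c) := e.subsingleton_congr.mpr hsub
  obtain ⟨p⟩ := e.nonempty_congr.mpr hne
  let m : DisplayPoset S C := ⟨⟨c, hc.1⟩, p⟩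
  refine ⟨fun _ _ _ => coverD_unique, ⟨m, leD_of_isGreatest (m := m) hc, ?_⟩,
    fun a h => (ltD_of_transGen_coverD h).2 rfl⟩
  exact fun m' hm' => leD_antisymm (leD_of_isGreatest (m := m) hc m') (hm' m)

/-- For a finite regular constructible persistent set `S` that is eventually a
single point, the transitive reduction of the DAG of the display poset of
`S|C` is a rooted tree: every vertex has at most one outgoing edge, there is a
unique maximal element below which everything lies (connectedness), and the
edge relation is acyclic. -/
theorem stmt_13 (hC : MinimalCriticalSet S C) (hreg : RegularPS S C)
    (hfin : FinitePS S)
    (hbig : ∃ T : ℝ, ∀ t : ℝ, T ≤ t → Nonempty (S.obj t) ∧ Subsingleton (S.obj t)) :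
    (∀ a b b' : DisplayPoset S C, coverD S C a b → coverD S C a b' → b = b') ∧
    (∃! m : DisplayPoset S C, ∀ a : DisplayPoset S C, leD S C a m) ∧
    (∀ a : DisplayPoset S C, ¬ Relation.TransGen (coverD S C) a a) :=
  stmt_13_general hC hreg hbig
end
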